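/- For each i ∈ {0, 1, …, t−1}, the polynomial f_i is nonzero, the number n + 1 − s_i is even, and LM(f_i) = w₂^{(n+1−s_i)/2 − 2^i}·w₃^{α_i·s_{i−1} + 2^i − 1}; that is, this monomial appears in f_i with coefficient 1 and every monomial appearing in f_i with nonzero coefficient is ⪯ it. -/
import Mathlib


open MvPolynomial Finset

noncomputable section

/-- `R2 = (ℤ/2)[w₂, w₃]`, the polynomial ring in two variables over `ℤ/2ℤ`. -/
abbrev R2 : Type := MvPolynomial (Fin 2) (ZMod 2)

/-- The variable `w₂`. -/
def w2 : R2 := X 0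

/-- The variable `w₃`. -/
def w3 : R2 := X 1

/-- The polynomials `g_r`: `g₀ = 1`, `g₁ = 0`, `g₂ = w₂`,
`g_{r+3} = w₂ g_{r+1} + w₃ g_r`. -/
def g : ℕ → R2
  | 0 => 1
  | 1 => 0
  | 2 => w2
  | (r+3) => w2 * g (r+1) + w3 * g r

/-- The coefficient of the monomial `w₂^b * w₃^c` in `p`. -/
def mcoeff (b c : ℕ) (p : R2) : ZMod 2 :=
  MvPolynomial.coeff (Finsupp.single 0 b + Finsupp.single 1 c) p

/-- `IsLM p b c`: the monomial `w₂^b * w₃^c` is the leading monomial of `p`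
with respect to the lexicographic monomial order with `w₃ ≺ w₂`, i.e. it appears
in `p` with coefficient `1` and every monomial `w₂^{b'} w₃^{c'}` appearing in `p`
with nonzero coefficient satisfies `w₂^{b'} w₃^{c'} ⪯ w₂^b w₃^c`. -/
def IsLM (p : R2) (b c : ℕ) : Prop :=
  mcoeff b c p = 1 ∧ ∀ b' c', mcoeff b' c' p ≠ 0 → b' < b ∨ (b' = b ∧ c' ≤ c)

/-- `alpha N j` is the `j`-th binary digit of `N`. -/
def alpha (N j : ℕ) : ℕ := if N.testBit j then 1 else 0

/-- `sPart N i = Σ_{j=0}^{i-1} α_j 2^j` (so the paper's `s_i` is `sPart N (i+1)`,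
and `s_{i-1}` is `sPart N i`; in particular `s_{-1} = sPart N 0 = 0`).  Here
`N = n - 2^t + 1`. -/
def sPart (N i : ℕ) : ℕ := ∑ j ∈ Finset.range i, alpha N j * 2^j

/-- The polynomial `f_i = w₃^{α_i s_{i-1}} g_{n-2+2^i-s_i}`. -/
def f (n t i : ℕ) : R2 :=
  w3 ^ (alpha (n+1-2^t) i * sPart (n+1-2^t) i) * g (n - 2 + 2^i - sPart (n+1-2^t) (i+1))

lemma g_succ (r : ℕ) : g (r+3) = w2 * g (r+1) + w3 * g r := rfl

lemma mcoeff_add (b c : ℕ) (p q : R2) : mcoeff b c (p + q) = mcoeff b c p + mcoeff b c q :=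
  coeff_add _ _ _

lemma mcoeff_w2_mul (b c : ℕ) (p : R2) :
    mcoeff b c (w2 * p) = if b = 0 then 0 else mcoeff (b-1) c p := by
  rw [mcoeff, w2, coeff_X_mul']
  by_cases hb : b = 0
  · simp [hb, Finsupp.mem_support_iff, Finsupp.single_apply]
  · rw [if_pos, if_neg hb, mcoeff]
    · congr 1
      ext x
      fin_cases x <;> simp [Finsupp.single_apply, Finsupp.tsub_apply]
    · simp [Finsupp.mem_support_iff, Finsupp.single_apply, hb]

lemma mcoeff_w3_mul (b c : ℕ) (p : R2) :
    mcoeff b c (w3 * p) = if c = 0 then 0 else mcoeff b (c-1) p := by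
  rw [mcoeff, w3, coeff_X_mul']
  by_cases hc : c = 0
  · simp [hc, Finsupp.mem_support_iff, Finsupp.single_apply]
  · rw [if_pos, if_neg hc, mcoeff]
    · congr 1
      ext x
      fin_cases x <;> simp [Finsupp.single_apply, Finsupp.tsub_apply]
    · simp [Finsupp.mem_support_iff, Finsupp.single_apply, hc]

lemma mcoeff_one (b c : ℕ) : mcoeff b c (1 : R2) = if b = 0 ∧ c = 0 then 1 else 0 := by
  rw [mcoeff, coeff_one]
  congr 1
  simp [Finsupp.ext_iff, Fin.forall_fin_two, Finsupp.single_apply, eq_comm]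

lemma mcoeff_w2 (b c : ℕ) : mcoeff b c w2 = if b = 1 ∧ c = 0 then 1 else 0 := by
  rw [mcoeff, w2, MvPolynomial.coeff_X']
  congr 1
  simp [Finsupp.ext_iff, Fin.forall_fin_two, Finsupp.single_apply, eq_comm]

lemma mcoeff_g (r : ℕ) : ∀ b c : ℕ,
    mcoeff b c (g r) = if 2*b + 3*c = r then ((b+c).choose b : ZMod 2) else 0 := by
  induction r using Nat.strong_induction_on with
  | _ r ih =>
    match r with
    | 0 =>
      intro b c
      rw [show g 0 = 1 from rfl, mcoeff_one]
      split_ifs with h1 h2 h2 <;> first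
        | (simp_all; try omega)
        | omega
        | rfl
    | 1 =>
      intro b c
      rw [show g 1 = 0 from rfl]
      have : mcoeff b c (0 : R2) = 0 := coeff_zero _
      rw [this]
      split_ifs with h
      · omega
      · rfl
    | 2 =>
      intro b c
      rw [show g 2 = w2 from rfl, mcoeff_w2]
      split_ifs with h1 h2 h2 <;> first
        | (simp_all; try omega)
        | omega
        | rfl
    | (r+3) =>
      intro b c
      rw [g_succ, mcoeff_add, mcoeff_w2_mul, mcoeff_w3_mul,
        ih (r+1) (by omega), ih r (by omega)]
      rcases b with _ | b <;> rcases c with _ | c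
      · rw [if_pos rfl, if_pos rfl, if_neg (show ¬(2*0+3*0 = r+3) by omega)]
        simp
      · rw [if_pos rfl, if_neg (Nat.succ_ne_zero c), zero_add]
        simp only [Nat.add_sub_cancel, Nat.zero_add, zero_add, Nat.choose_zero_right,
          Nat.cast_one, Nat.mul_zero, Nat.zero_mul]
        split_ifs with h1 h2 h2
        · rfl
        · omega
        · omega
        · rfl
      · rw [if_neg (Nat.succ_ne_zero b), if_pos rfl, add_zero]
        simp only [Nat.add_sub_cancel, Nat.add_zero, add_zero, Nat.choose_self,
          Nat.cast_one, Nat.mul_zero, Nat.zero_mul]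
        split_ifs with h1 h2 h2
        · rfl
        · omega
        · omega
        · rfl
      · rw [if_neg (Nat.succ_ne_zero b), if_neg (Nat.succ_ne_zero c)]
        simp only [Nat.add_sub_cancel]
        by_cases h : 2*(b+1) + 3*(c+1) = r + 3
        · rw [if_pos (show 2*b+3*(c+1) = r+1 by omega),
            if_pos (show 2*(b+1)+3*c = r by omega), if_pos h]
          have hch : (b+1+(c+1)).choose (b+1) = (b+c+1).choose b + (b+c+1).choose (b+1) := by
            rw [show b+1+(c+1) = (b+c+1)+1 from by omega, Nat.choose_succ_succ]
          rw [hch]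
          rw [show b+(c+1) = b+c+1 from by omega, show b+1+c = b+c+1 from by omega]
          push_cast
          ring
        · rw [if_neg (show ¬(2*b+3*(c+1) = r+1) by omega),
            if_neg (show ¬(2*(b+1)+3*c = r) by omega), if_neg h, add_zero]

lemma lucas2 (n k : ℕ) :
    ((n.choose k : ZMod 2)) = (((n % 2).choose (k % 2) : ZMod 2)) * (((n / 2).choose (k / 2) : ZMod 2)) := by
  haveI : Fact (Nat.Prime 2) := ⟨by norm_num⟩
  have h := Choose.choose_modEq_choose_mod_mul_choose_div (p := 2) (n := n) (k := k)
  have h2 := (ZMod.intCast_eq_intCast_iff _ _ _).mpr h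
  push_cast at h2
  exact_mod_cast h2

lemma lemL : ∀ j b c : ℕ, 2^j ∣ 2*b + 3*c + 3 → ((b+c).choose b : ZMod 2) ≠ 0 → 2^j ∣ c + 1 := by
  intro j
  induction j with
  | zero => intro b c _ _; simpa using one_dvd _
  | succ j ih =>
    intro b c hd hne
    have h2 : (2 : ℕ) ∣ 2*b + 3*c + 3 := dvd_trans ⟨2^j, by ring⟩ hd
    have hc : c % 2 = 1 := by omega
    have hb : b % 2 = 0 := by
      rcases Nat.mod_two_eq_zero_or_one b with h | h
      · exact h
      · exfalso
        apply hne
        rw [lucas2, show (b+c) % 2 = 0 by omega, h]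
        simp
    obtain ⟨b', rfl⟩ : ∃ b', b = 2*b' := ⟨b/2, by omega⟩
    obtain ⟨c', rfl⟩ : ∃ c', c = 2*c'+1 := ⟨c/2, by omega⟩
    rw [lucas2, show (2*b' + (2*c'+1)) % 2 = 1 by omega, show (2*b') % 2 = 0 by omega,
      show (2*b' + (2*c'+1)) / 2 = b' + c' by omega, show (2*b') / 2 = b' by omega] at hne
    simp only [Nat.choose] at hne
    rw [Nat.cast_one, one_mul] at hne
    obtain ⟨k, hk⟩ := hd
    have hk' : 2*b' + 3*c' + 3 = 2^j * k := by
      have h1 : 2*(2*b') + 3*(2*c'+1) + 3 = 2*(2*b' + 3*c' + 3) := by ring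
      have h2 : 2^(j+1) * k = 2*(2^j * k) := by ring
      omega
    obtain ⟨m, hm⟩ := ih b' c' ⟨k, hk'⟩ hne
    refine ⟨m, ?_⟩
    have h3 : 2^(j+1)*m = 2*(2^j*m) := by ring
    omega

lemma lemM : ∀ i q : ℕ, (((2^i*q + (2^i - 1)).choose (2^i*q) : ℕ) : ZMod 2) = 1 := by
  intro i
  induction i with
  | zero => intro q; simp
  | succ i ih =>
    intro q
    have h1 : 1 ≤ 2^i := Nat.one_le_two_pow
    have e1 : 2^(i+1)*q + (2^(i+1) - 1) = 2*(2^i*q + (2^i - 1)) + 1 := by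
      have h2 : (2:ℕ)^(i+1) = 2*2^i := by ring
      have h3 : (2:ℕ)^(i+1)*q = 2*(2^i*q) := by ring
      omega
    have e2 : 2^(i+1)*q = 2*(2^i*q) := by ring
    rw [e1, e2, lucas2, show (2*(2^i*q + (2^i - 1)) + 1) % 2 = 1 by omega,
      show (2*(2^i*q)) % 2 = 0 by omega,
      show (2*(2^i*q + (2^i - 1)) + 1) / 2 = 2^i*q + (2^i - 1) by omega,
      show (2*(2^i*q)) / 2 = 2^i*q by omega]
    simp only [Nat.choose]
    rw [Nat.cast_one, one_mul, ih]

lemma mcoeff_w3_pow_mul (e : ℕ) : ∀ b c : ℕ, ∀ p : R2,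
    mcoeff b c (w3^e * p) = if c < e then 0 else mcoeff b (c - e) p := by
  induction e with
  | zero => intro b c p; simp
  | succ e ih =>
    intro b c p
    rw [pow_succ, mul_comm (w3^e) w3, mul_assoc, mcoeff_w3_mul]
    rcases c with _ | c
    · rw [if_pos rfl, if_pos (by omega)]
    · rw [if_neg (Nat.succ_ne_zero c), Nat.add_sub_cancel, ih]
      split_ifs with h1 h2 h2
      · rfl
      · omega
      · omega
      · congr 1
        omega

lemma sPart_eq_mod (N : ℕ) : ∀ i : ℕ, sPart N i = N % 2^i := by
  intro i
  induction i with
  | zero => simp [sPart, Nat.mod_one]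
  | succ i ih =>
    have step : sPart N (i+1) = sPart N i + alpha N i * 2^i := Finset.sum_range_succ _ _
    rw [step, ih]
    have halpha : alpha N i = N / 2^i % 2 := by
      rcases Nat.mod_two_eq_zero_or_one (N / 2^i) with h | h <;>
        simp [alpha, Nat.testBit_eq_decide_div_mod_eq, h]
    rw [halpha, mul_comm]
    have := Nat.mod_mul (x := N) (a := 2^i) (b := 2)
    rw [show 2^i * 2 = 2^(i+1) by ring] at this
    omega

/-- Proposition 3.4: for `0 ≤ i ≤ t-1`, `f_i ≠ 0`, `n + 1 - s_i` is even, and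
`LM(f_i) = w₂^{(n+1-s_i)/2 - 2^i} w₃^{α_i s_{i-1} + 2^i - 1}`. -/
theorem f_leading_monomial (n t : ℕ) (hn : 7 ≤ n) (ht : 3 ≤ t)
    (h1 : 2 ^ t - 1 ≤ n) (h2 : n < 2 ^ (t + 1) - 1) :
    ∀ i < t,
      f n t i ≠ 0 ∧
      2 ∣ (n + 1 - sPart (n + 1 - 2 ^ t) (i + 1)) ∧
      IsLM (f n t i)
        ((n + 1 - sPart (n + 1 - 2 ^ t) (i + 1)) / 2 - 2 ^ i)
        (alpha (n + 1 - 2 ^ t) i * sPart (n + 1 - 2 ^ t) i + 2 ^ i - 1) := by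
  intro i hi
  set N := n + 1 - 2 ^ t with hN
  set s := sPart N (i+1) with hs
  set e := alpha N i * sPart N i with he
  have h8 : (8:ℕ) ≤ 2^t := by
    calc (8:ℕ) = 2^3 := rfl
    _ ≤ 2^t := Nat.pow_le_pow_right (by norm_num) ht
  have hTn : 2^t ≤ n + 1 := by
    have h0 : (1:ℕ) ≤ 2^t := Nat.one_le_two_pow
    omega
  have h2t1 : (2:ℕ)^t = 2 * 2^(t-1) := by
    conv_lhs => rw [show t = (t-1)+1 by omega]
    rw [pow_succ]
    ring
  obtain ⟨D, hD2⟩ : ∃ D, (2:ℕ)^(t-1-i) = D + 1 :=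
    ⟨2^(t-1-i) - 1, by have := Nat.one_le_two_pow (n := t-1-i); omega⟩
  have hD : (2:ℕ)^(t-1) = 2^i * D + 2^i := by
    rw [show t-1 = i + (t-1-i) by omega, pow_add, hD2]
    ring
  have hsmod : s = N % 2^(i+1) := sPart_eq_mod N (i+1)
  have hNsQ : N = 2^(i+1) * (N / 2^(i+1)) + s := by
    rw [hsmod]
    exact (Nat.div_add_mod N (2^(i+1))).symm
  set Q := N / 2^(i+1) with hQ
  have hslt : s < 2^(i+1) := by
    rw [hsmod]
    exact Nat.mod_lt _ (by positivity)
  have hpow1 : (2:ℕ)^(i+1) * Q = 2 * (2^i * Q) := by ring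
  have hA1 : 1 ≤ (2:ℕ)^i := Nat.one_le_two_pow
  have hhalf : (n + 1 - s) / 2 = 2^(t-1) + 2^i * Q := by omega
  have hb0 : (n + 1 - s) / 2 - 2^i = 2^i * D + 2^i * Q := by omega
  have hr : 2 * ((n + 1 - s) / 2 - 2^i) + 3 * (2^i - 1) = n - 2 + 2^i - s := by omega
  have hr3 : (n - 2 + 2^i - s) + 3 = 2^i * (2*D + 2*Q + 3) := by
    have hx : 2^i * (2*D + 2*Q + 3) = 2*(2^i*D) + 2*(2^i*Q) + 3*2^i := by ring
    omega
  have hLM : IsLM (f n t i) ((n + 1 - s) / 2 - 2^i) (e + 2^i - 1) := by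
    constructor
    · rw [f, ← hN, ← hs, ← he, mcoeff_w3_pow_mul, if_neg (show ¬(e + 2^i - 1 < e) by omega),
        show e + 2^i - 1 - e = 2^i - 1 by omega, mcoeff_g, if_pos hr,
        show (n + 1 - s) / 2 - 2^i = 2^i * (D + Q) from by rw [Nat.mul_add]; omega]
      exact lemM i (D + Q)
    · intro b' c' hne
      rw [f, ← hN, ← hs, ← he, mcoeff_w3_pow_mul] at hne
      by_cases hce : c' < e
      · rw [if_pos hce] at hne
        exact absurd rfl hne
      · rw [if_neg hce, mcoeff_g] at hne
        by_cases hcond : 2*b' + 3*(c'-e) = n - 2 + 2^i - s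
        · rw [if_pos hcond] at hne
          have hcd := lemL i b' (c'-e)
            (by rw [show 2*b'+3*(c'-e)+3 = (n-2+2^i-s)+3 by omega]; exact ⟨_, hr3⟩) hne
          have hle := Nat.le_of_dvd (by omega) hcd
          omega
        · rw [if_neg hcond] at hne
          exact absurd rfl hne
  have hne0 : f n t i ≠ 0 := by
    intro h0
    have hc1 := hLM.1
    rw [h0] at hc1
    simp only [mcoeff, coeff_zero] at hc1
    exact zero_ne_one hc1
  exact ⟨hne0, ⟨2^(t-1) + 2^i * Q, by omega⟩, hLM⟩

end
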